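/- arXiv:2311.11637 — 2 statements merged into one kernel-verified Lean document; each statement's English description precedes it below -/
import Mathlib

section
/- Let (ε̂, δ̂, χ̂, α̂, β̂, γ̂) be an optimal solution of the radial CNLS problem: minimize Σᵢ εᵢ² subject to ln x₁ᵢ = −ln(χᵢ) + δ(ln x₁ᵢ − ln x₂ᵢ) + εᵢ, χᵢ = αᵢ + βᵢᵀ(xᵢ/(x₁ᵢ^{1−d} x₂ᵢ^d)) − γᵢᵀyᵢ for all i, χᵢ ≤ α_h + β_hᵀ(xᵢ/(x₁ᵢ^{1−d} x₂ᵢ^d)) − γ_hᵀyᵢ for all i,h, and βᵢ ≥ 0, γᵢ ≥ 0. Then the residuals satisfy the sample orthogonality condition Σᵢ (ln x₁ᵢ − ln x₂ᵢ)·ε̂ᵢ = 0. -/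
/-!
Moving the slope `δ` by `t` and the residuals by `-t (ln x₁ᵢ - ln x₂ᵢ)` preserves
feasibility, so by optimality the sum of squared residuals along this line is minimal at
`t = 0`; the first-order condition of that quadratic in `t` is the orthogonality condition.
-/

open Real

/-- Feasibility for the radial CNLS problem (two inputs, `s` outputs),
with normalization parameter `d`. -/
def RadialCNLSFeasible {n s : ℕ} (x : Fin n → Fin 2 → ℝ) (y : Fin n → Fin s → ℝ)
    (d : ℝ)
    (ε : Fin n → ℝ) (δ : ℝ) (χ α : Fin n → ℝ)
    (β : Fin n → Fin 2 → ℝ) (γ : Fin n → Fin s → ℝ) : Prop :=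
  (∀ i, 0 < χ i) ∧
  (∀ i, Real.log (x i 0) =
      -Real.log (χ i) + δ * (Real.log (x i 0) - Real.log (x i 1)) + ε i) ∧
  (∀ i, χ i = α i + (∑ j, β i j * (x i j / ((x i 0) ^ (1 - d) * (x i 1) ^ d)))
      - ∑ k, γ i k * y i k) ∧
  (∀ i h, χ i ≤ α h + (∑ j, β h j * (x i j / ((x i 0) ^ (1 - d) * (x i 1) ^ d)))
      - ∑ k, γ h k * y i k) ∧
  (∀ i j, 0 ≤ β i j) ∧ (∀ i k, 0 ≤ γ i k)

theorem eq_zero_of_forall_two_mul_mul_le {S Q : ℝ} (hQ : 0 ≤ Q)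
    (h : ∀ t : ℝ, 2 * t * S ≤ t ^ 2 * Q) : S = 0 := by
  -- `t = S / (Q + 1)` rather than the minimiser `S / Q` avoids a case split on `Q = 0`.
  have hgap : (Q + 1) ^ 2 * (2 * (S / (Q + 1)) * S - (S / (Q + 1)) ^ 2 * Q)
      = S ^ 2 * (Q + 2) := by
    field_simp [show Q + 1 ≠ 0 by linarith]
    ring
  have hS2 : S ^ 2 ≤ 0 := by
    refine nonpos_of_mul_nonpos_left ?_ (by linarith : 0 < Q + 2)
    exact hgap ▸ mul_nonpos_of_nonneg_of_nonpos (sq_nonneg _) (sub_nonpos.mpr (h _))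
  exact pow_eq_zero_iff two_ne_zero |>.mp (le_antisymm hS2 (sq_nonneg S))

theorem Finset.sum_mul_eq_zero_of_forall_sum_sq_le {ι : Type*} (s : Finset ι) (e z : ι → ℝ)
    (h : ∀ t : ℝ, ∑ i ∈ s, e i ^ 2 ≤ ∑ i ∈ s, (e i - t * z i) ^ 2) :
    ∑ i ∈ s, z i * e i = 0 := by
  refine eq_zero_of_forall_two_mul_mul_le (Q := ∑ i ∈ s, z i ^ 2)
    (Finset.sum_nonneg fun i _ => sq_nonneg (z i)) fun t => ?_
  have hexpand : ∑ i ∈ s, (e i - t * z i) ^ 2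
      = ∑ i ∈ s, e i ^ 2 - 2 * t * ∑ i ∈ s, z i * e i + t ^ 2 * ∑ i ∈ s, z i ^ 2 := by
    simp only [Finset.mul_sum, ← Finset.sum_sub_distrib, ← Finset.sum_add_distrib]
    exact Finset.sum_congr rfl fun i _ => by ring
  linarith [h t]

theorem RadialCNLSFeasible.shift_slope {n s : ℕ} {x : Fin n → Fin 2 → ℝ}
    {y : Fin n → Fin s → ℝ} {d : ℝ} {ε : Fin n → ℝ} {δ : ℝ} {χ α : Fin n → ℝ}
    {β : Fin n → Fin 2 → ℝ} {γ : Fin n → Fin s → ℝ}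
    (hfeas : RadialCNLSFeasible x y d ε δ χ α β γ) (t : ℝ) :
    RadialCNLSFeasible x y d (fun i => ε i - t * (log (x i 0) - log (x i 1))) (δ + t)
      χ α β γ := by
  obtain ⟨hχ, hlog, hχeq, hineq, hβ, hγ⟩ := hfeas
  exact ⟨hχ, fun i => by linarith [hlog i], hχeq, hineq, hβ, hγ⟩

theorem stmt_5_general {n s : ℕ}
    (x : Fin n → Fin 2 → ℝ)
    (y : Fin n → Fin s → ℝ)
    (d : ℝ)
    (ε : Fin n → ℝ) (δ : ℝ) (χ α : Fin n → ℝ)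
    (β : Fin n → Fin 2 → ℝ) (γ : Fin n → Fin s → ℝ)
    (hfeas : RadialCNLSFeasible x y d ε δ χ α β γ)
    (hopt : ∀ ε' δ' χ' α' β' γ', RadialCNLSFeasible x y d ε' δ' χ' α' β' γ' →
      (∑ i, (ε i) ^ 2) ≤ ∑ i, (ε' i) ^ 2) :
    ∑ i, (Real.log (x i 0) - Real.log (x i 1)) * ε i = 0 :=
  Finset.sum_mul_eq_zero_of_forall_sum_sq_le _ ε _ fun t => hopt _ _ _ _ _ _ (hfeas.shift_slope t)

/-- Theorem 2: at any optimal solution of the radial CNLS problem, the residuals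
satisfy the sample orthogonality condition `∑ᵢ (ln x₁ᵢ − ln x₂ᵢ) ε̂ᵢ = 0`. -/
theorem stmt_5 {n s : ℕ}
    (x : Fin n → Fin 2 → ℝ) (hx : ∀ i j, 0 < x i j)
    (y : Fin n → Fin s → ℝ)
    (d : ℝ) (hd : 0 < d) (hd1 : d < 1)
    (ε : Fin n → ℝ) (δ : ℝ) (χ α : Fin n → ℝ)
    (β : Fin n → Fin 2 → ℝ) (γ : Fin n → Fin s → ℝ)
    (hfeas : RadialCNLSFeasible x y d ε δ χ α β γ)
    (hopt : ∀ ε' δ' χ' α' β' γ', RadialCNLSFeasible x y d ε' δ' χ' α' β' γ' →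
      (∑ i, (ε i) ^ 2) ≤ ∑ i, (ε' i) ^ 2) :
    ∑ i, (Real.log (x i 0) - Real.log (x i 1)) * ε i = 0 :=
  stmt_5_general x y d ε δ χ α β γ hfeas hopt
end

section
/- In the radial CNLS problem with two inputs, the optimal residuals ε̂ᵢ are invariant to the choice of the normalization parameter d ∈ (0,1): if (ε̂, δ̂) is optimal for parameter d, then for any other d' ∈ (0,1), the solution with δ' = δ̂ + (d' − d) and the same residuals ε̂ and suitably rescaled (χ, α, β, γ) is feasible and optimal, so the optimal value and residuals coincide across d. -/
/-! Changing the normalization from `d` to `d'` multiplies the normalized regressors of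
observation `i` by `tᵢ = (x₁ᵢ/x₂ᵢ)^(d'-d)`. Scaling `χᵢ` by `tᵢ` absorbs this in the log equation
at the cost of shifting `δ` by `d' - d`, and scaling `αₕ, γₕ` by `tₕ` keeps the fitted values.
The Afriat inequality of hyperplane `h` at observation `i` can then fail only when the input
ratios of `i` and `h` differ. By strict weighted AM-GM, the `d'`-hyperplane with slopes
`((1-d')/rₕ^d', d'/rₕ^(d'-1))` equals `1` at the ratio `rₕ` of `h` and exceeds `1` at every
other ratio, so adding a large multiple `M` of it to hyperplane `h` and subtracting `M` from `αₕ`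
restores all inequalities without changing the fit. The same argument from `d'` back to `d` gives
optimality. -/

open Real

lemma div_rpow_one_sub_mul_rpow_left {a b : ℝ} (ha : 0 < a) (hb : 0 < b) (c : ℝ) :
    a / (a ^ (1 - c) * b ^ c) = (a / b) ^ c := by
  rw [div_rpow ha.le hb.le, rpow_sub ha, rpow_one]
  field_simp

lemma div_rpow_one_sub_mul_rpow_right {a b : ℝ} (ha : 0 < a) (hb : 0 < b) (c : ℝ) :
    b / (a ^ (1 - c) * b ^ c) = (a / b) ^ (c - 1) := by
  rw [div_rpow ha.le hb.le, rpow_sub ha, rpow_sub ha, rpow_sub hb, rpow_one, rpow_one]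
  field_simp

lemma sum_mul_div_rpow_one_sub_mul_rpow {x : Fin 2 → ℝ} (hx : ∀ j, 0 < x j) (b : Fin 2 → ℝ)
    (c : ℝ) :
    ∑ j, b j * (x j / (x 0 ^ (1 - c) * x 1 ^ c)) =
      b 0 * (x 0 / x 1) ^ c + b 1 * (x 0 / x 1) ^ (c - 1) := by
  rw [Fin.sum_univ_two, div_rpow_one_sub_mul_rpow_left (hx 0) (hx 1),
    div_rpow_one_sub_mul_rpow_right (hx 0) (hx 1)]

lemma one_lt_one_sub_mul_rpow_add_mul_rpow_sub_one {p σ : ℝ} (hp : 0 < p) (hp1 : p < 1)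
    (hσ : 0 < σ) (hσ1 : σ ≠ 1) :
    1 < (1 - p) * σ ^ p + p * σ ^ (p - 1) := by
  have bernoulli : σ ^ (1 - p) < 1 + (1 - p) * (σ - 1) := by
    simpa using rpow_one_add_lt_one_add_mul_self (s := σ - 1) (by linarith)
      (sub_ne_zero.mpr hσ1) (p := 1 - p) (by linarith) (by linarith)
  have h := mul_lt_mul_of_pos_right bernoulli (rpow_pos_of_pos hσ (p - 1))
  rw [← rpow_add hσ, show 1 - p + (p - 1) = (0 : ℝ) by ring, rpow_zero] at h
  have hσp : σ * σ ^ (p - 1) = σ ^ p := by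
    rw [← rpow_one_add' hσ.le (by linarith)]
    ring_nf
  linear_combination h + (1 - p) * hσp

lemma exists_nonneg_forall_le_mul {ι : Type*} [Finite ι] {g N : ι → ℝ}
    (h : ∀ i, N i ≤ 0 ∧ g i = 0 ∨ 0 < g i) :
    ∃ M, 0 ≤ M ∧ ∀ i, N i ≤ M * g i := by
  obtain ⟨M, hM⟩ := Finite.exists_le fun i => N i / g i
  refine ⟨max M 0, le_max_right _ _, fun i => ?_⟩
  rcases h i with ⟨hNi, hgi⟩ | hgi
  · rwa [hgi, mul_zero]
  · calc N i = N i / g i * g i := (div_mul_cancel₀ _ hgi.ne').symm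
      _ ≤ max M 0 * g i := by gcongr; exact (hM i).trans (le_max_left _ _)

lemma one_lt_div_rpow_mul_rpow_add_div_rpow_mul_rpow {p ρ r : ℝ} (hp : 0 < p) (hp1 : p < 1)
    (hρ : 0 < ρ) (hr : 0 < r) (hne : r ≠ ρ) :
    1 < (1 - p) / ρ ^ p * r ^ p + p / ρ ^ (p - 1) * r ^ (p - 1) := by
  have h := one_lt_one_sub_mul_rpow_add_mul_rpow_sub_one hp hp1 (div_pos hr hρ)
    (div_ne_one_of_ne hne)
  rw [div_rpow hr.le hρ.le, div_rpow hr.le hρ.le] at h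
  linear_combination h

lemma div_rpow_mul_rpow_add_div_rpow_mul_rpow_self {ρ : ℝ} (hρ : 0 < ρ) (p : ℝ) :
    (1 - p) / ρ ^ p * ρ ^ p + p / ρ ^ (p - 1) * ρ ^ (p - 1) = 1 := by
  rw [div_mul_cancel₀ _ (rpow_pos_of_pos hρ p).ne',
    div_mul_cancel₀ _ (rpow_pos_of_pos hρ (p - 1)).ne']
  ring

/-- The left side is the violation of the Afriat inequalities of a hyperplane with ratio `ρ` after
rescaling by `ρ ^ (d' - d)`; the bracket on the right is the AM-GM bump, which vanishes at `ρ`. -/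
lemma exists_afriat_correction {ι : Type*} [Finite ι] {r : ι → ℝ} (hr : ∀ i, 0 < r i)
    {d d' : ℝ} (hd' : 0 < d') (hd'1 : d' < 1) {χ c : ι → ℝ} {a ρ : ℝ} (hρ : 0 < ρ)
    {b : Fin 2 → ℝ} (hle : ∀ i, χ i ≤ a + (b 0 * r i ^ d + b 1 * r i ^ (d - 1)) - c i) :
    ∃ M, 0 ≤ M ∧ ∀ i,
      r i ^ (d' - d) * χ i - (ρ ^ (d' - d) * a + (b 0 * r i ^ d' + b 1 * r i ^ (d' - 1))
          - ρ ^ (d' - d) * c i)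
        ≤ M * ((1 - d') / ρ ^ d' * r i ^ d' + d' / ρ ^ (d' - 1) * r i ^ (d' - 1) - 1) := by
  refine exists_nonneg_forall_le_mul fun i => ?_
  by_cases hi : r i = ρ
  · subst hi
    refine .inl ⟨?_, by rw [div_rpow_mul_rpow_add_div_rpow_mul_rpow_self hρ, sub_self]⟩
    have h0 : r i ^ (d' - d) * r i ^ d = r i ^ d' := by rw [← rpow_add hρ]; ring_nf
    have h1 : r i ^ (d' - d) * r i ^ (d - 1) = r i ^ (d' - 1) := by rw [← rpow_add hρ]; ring_nf
    have := mul_le_mul_of_nonneg_left (hle i) (rpow_pos_of_pos hρ (d' - d)).le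
    linear_combination this + b 0 * h0 + b 1 * h1
  · exact .inr (sub_pos.mpr (one_lt_div_rpow_mul_rpow_add_div_rpow_mul_rpow hd' hd'1 hρ (hr i) hi))

theorem RadialCNLSFeasible.exists_renormalize {n s : ℕ} {x : Fin n → Fin 2 → ℝ}
    (hx : ∀ i j, 0 < x i j) {y : Fin n → Fin s → ℝ} {d d' : ℝ} (hd' : 0 < d') (hd'1 : d' < 1)
    {ε : Fin n → ℝ} {δ : ℝ} {χ α : Fin n → ℝ} {β : Fin n → Fin 2 → ℝ} {γ : Fin n → Fin s → ℝ}
    (h : RadialCNLSFeasible x y d ε δ χ α β γ) :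
    ∃ χ' α' β' γ', RadialCNLSFeasible x y d' ε (δ + (d' - d)) χ' α' β' γ' := by
  obtain ⟨hχ, hlog, heq, hle, hβ, hγ⟩ := h
  set r : Fin n → ℝ := fun i => x i 0 / x i 1
  have hr : ∀ i, 0 < r i := fun i => div_pos (hx i 0) (hx i 1)
  have hnorm : ∀ i (b : Fin 2 → ℝ) (c : ℝ),
      ∑ j, b j * (x i j / (x i 0 ^ (1 - c) * x i 1 ^ c)) = b 0 * r i ^ c + b 1 * r i ^ (c - 1) :=
    fun i => sum_mul_div_rpow_one_sub_mul_rpow (hx i)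
  simp only [hnorm] at heq hle
  choose M hM0 hM using fun h => exists_afriat_correction hr hd' hd'1 (hr h) fun i => hle i h
  set t : Fin n → ℝ := fun i => r i ^ (d' - d)
  have ht : ∀ i, 0 < t i := fun i => rpow_pos_of_pos (hr i) _
  refine ⟨fun i => t i * χ i, fun h => t h * α h - M h,
    fun h => ![β h 0 + M h * ((1 - d') / r h ^ d'), β h 1 + M h * (d' / r h ^ (d' - 1))],
    fun h k => t h * γ h k, fun i => mul_pos (ht i) (hχ i), fun i => ?_, fun i => ?_,
    fun i h => ?_, fun h j => ?_, fun h k => mul_nonneg (ht h).le (hγ h k)⟩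
  · rw [log_mul (ht i).ne' (hχ i).ne', log_rpow (hr i), log_div (hx i 0).ne' (hx i 1).ne']
    linear_combination hlog i
  · simp only [hnorm, Matrix.cons_val_zero, Matrix.cons_val_one, mul_assoc, ← Finset.mul_sum]
    have hself := div_rpow_mul_rpow_add_div_rpow_mul_rpow_self (hr i) d'
    have h0 : t i * r i ^ d = r i ^ d' := by rw [← rpow_add (hr i)]; ring_nf
    have h1 : t i * r i ^ (d - 1) = r i ^ (d' - 1) := by rw [← rpow_add (hr i)]; ring_nf
    linear_combination t i * heq i + β i 0 * h0 + β i 1 * h1 - M i * hself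
  · simp only [hnorm, Matrix.cons_val_zero, Matrix.cons_val_one, mul_assoc, ← Finset.mul_sum]
    linear_combination hM h i
  · fin_cases j
    · exact add_nonneg (hβ h 0)
        (mul_nonneg (hM0 h) (div_nonneg (by linarith) (rpow_pos_of_pos (hr h) _).le))
    · exact add_nonneg (hβ h 1)
        (mul_nonneg (hM0 h) (div_nonneg hd'.le (rpow_pos_of_pos (hr h) _).le))

/-- The optimal residuals of radial CNLS are invariant to the normalization
parameter `d`: if `(ε̂, δ̂, …)` is optimal for `d`, then for any `d'` the same
residuals together with `δ' = δ̂ + (d' − d)` and suitably rescaled `(χ, α, β, γ)`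
are feasible and optimal for `d'`. -/
theorem stmt_7 {n s : ℕ}
    (x : Fin n → Fin 2 → ℝ) (hx : ∀ i j, 0 < x i j)
    (y : Fin n → Fin s → ℝ)
    (d d' : ℝ) (hd : 0 < d) (hd1 : d < 1) (hd' : 0 < d') (hd'1 : d' < 1)
    (ε : Fin n → ℝ) (δ : ℝ) (χ α : Fin n → ℝ)
    (β : Fin n → Fin 2 → ℝ) (γ : Fin n → Fin s → ℝ)
    (hfeas : RadialCNLSFeasible x y d ε δ χ α β γ)
    (hopt : ∀ ε' δ' χ' α' β' γ', RadialCNLSFeasible x y d ε' δ' χ' α' β' γ' →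
      (∑ i, (ε i) ^ 2) ≤ ∑ i, (ε' i) ^ 2) :
    ∃ (χ' α' : Fin n → ℝ) (β' : Fin n → Fin 2 → ℝ) (γ' : Fin n → Fin s → ℝ),
      RadialCNLSFeasible x y d' ε (δ + (d' - d)) χ' α' β' γ' ∧
      (∀ ε'' δ'' χ'' α'' β'' γ'', RadialCNLSFeasible x y d' ε'' δ'' χ'' α'' β'' γ'' →
        (∑ i, (ε i) ^ 2) ≤ ∑ i, (ε'' i) ^ 2) := by
  obtain ⟨χ', α', β', γ', hfeas'⟩ := hfeas.exists_renormalize hx hd' hd'1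
  refine ⟨χ', α', β', γ', hfeas', fun ε'' δ'' χ'' α'' β'' γ'' hfeas'' => ?_⟩
  obtain ⟨χ₀, α₀, β₀, γ₀, hfeas₀⟩ := hfeas''.exists_renormalize hx hd hd1
  exact hopt ε'' _ χ₀ α₀ β₀ γ₀ hfeas₀
end
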